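/- arXiv:1805.01569 — 3 statements merged into one kernel-verified Lean document; each statement's English description precedes it below -/
import Mathlib

section
/- Let α, β, z ∈ ℂ and set ω = 2·Im( conj(α)·β ), assumed nonzero. Define the real numbers u₁ = Im(z α) and u₂ = Im(z β). Then (|ω| / (2·√(|α|² + |β|²)))·|z| ≤ √(u₁² + u₂²) ≤ √(|α|² + |β|²)·|z|. -/
/-!
Put `p = z α` and `q = z β`. Then `(u₁, u₂) = (Im p, Im q)`, and since `conj p * q = |z|² conj α β`,
the Wronskian gives `ω |z|² / 2 = Im (conj p * q) = Re p · Im q − Im p · Re q`. Cauchy–Schwarz bounds this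
by `√(Re p² + Re q²) · √(u₁² + u₂²)`, and both `√(Re p² + Re q²)` and `√(u₁² + u₂²)` are at most
`√(|p|² + |q|²) = √(|α|² + |β|²) · |z|`; this gives both inequalities.
-/

open Complex ComplexConjugate

lemma abs_mul_sub_mul_le_sqrt_mul_sqrt (a b c d : ℝ) :
    |a * d - b * c| ≤ √(a ^ 2 + c ^ 2) * √(b ^ 2 + d ^ 2) := by
  rw [← Real.sqrt_mul (by positivity), ← Real.sqrt_sq_eq_abs]
  exact Real.sqrt_le_sqrt (by nlinarith [sq_nonneg (a * b + c * d)])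

lemma sqrt_sq_add_sq_le_of_abs_le {a b A B : ℝ} (ha : |a| ≤ A) (hb : |b| ≤ B) :
    √(a ^ 2 + b ^ 2) ≤ √(A ^ 2 + B ^ 2) :=
  Real.sqrt_le_sqrt (add_le_add (sq_le_sq' (abs_le.mp ha).1 (abs_le.mp ha).2)
    (sq_le_sq' (abs_le.mp hb).1 (abs_le.mp hb).2))

namespace Complex

lemma im_conj_mul (p q : ℂ) : (conj p * q).im = p.re * q.im - p.im * q.re := by
  simp only [mul_im, conj_re, conj_im]
  ring

lemma im_conj_mul_mul_mul (z α β : ℂ) : (conj (z * α) * (z * β)).im = ‖z‖ ^ 2 * (conj α * β).im := by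
  rw [map_mul, show conj z * conj α * (z * β) = conj z * z * (conj α * β) by ring, conj_mul',
    ← ofReal_pow, im_ofReal_mul]

lemma sqrt_norm_mul_sq_add_norm_mul_sq (z α β : ℂ) :
    √(‖z * α‖ ^ 2 + ‖z * β‖ ^ 2) = √(‖α‖ ^ 2 + ‖β‖ ^ 2) * ‖z‖ := by
  rw [norm_mul, norm_mul, show (‖z‖ * ‖α‖) ^ 2 + (‖z‖ * ‖β‖) ^ 2 = ‖z‖ ^ 2 * (‖α‖ ^ 2 + ‖β‖ ^ 2) by ring,
    Real.sqrt_mul (by positivity), Real.sqrt_sq (norm_nonneg z), mul_comm]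

lemma abs_im_conj_mul_le (p q : ℂ) :
    |(conj p * q).im| ≤ √(‖p‖ ^ 2 + ‖q‖ ^ 2) * √(p.im ^ 2 + q.im ^ 2) := by
  rw [im_conj_mul]
  calc |p.re * q.im - p.im * q.re| ≤ √(p.re ^ 2 + q.re ^ 2) * √(p.im ^ 2 + q.im ^ 2) :=
        abs_mul_sub_mul_le_sqrt_mul_sqrt _ _ _ _
    _ ≤ √(‖p‖ ^ 2 + ‖q‖ ^ 2) * √(p.im ^ 2 + q.im ^ 2) :=
        mul_le_mul_of_nonneg_right
          (sqrt_sq_add_sq_le_of_abs_le (abs_re_le_norm p) (abs_re_le_norm q)) (Real.sqrt_nonneg _)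

end Complex

lemma div_mul_le_of_mul_sq_le {c S x R : ℝ} (hS : 0 ≤ S) (hx : 0 ≤ x) (hR : 0 ≤ R)
    (h : c * x ^ 2 ≤ S * x * R) : c / S * x ≤ R := by
  rcases hS.eq_or_lt with rfl | hS
  · simpa using hR
  rcases hx.eq_or_lt with rfl | hx
  · simpa using hR
  rw [div_mul_eq_mul_div, div_le_iff₀ hS]
  nlinarith

theorem prufer_amplitude_comparable_general (α β z : ℂ) (ω : ℝ)
    (hω : ω = 2 * ((starRingEnd ℂ α) * β).im)
    (u₁ u₂ : ℝ) (hu₁ : u₁ = (z * α).im) (hu₂ : u₂ = (z * β).im) :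
    (|ω| / (2 * Real.sqrt (‖α‖ ^ 2 + ‖β‖ ^ 2))) * ‖z‖
      ≤ Real.sqrt (u₁ ^ 2 + u₂ ^ 2) ∧
    Real.sqrt (u₁ ^ 2 + u₂ ^ 2)
      ≤ Real.sqrt (‖α‖ ^ 2 + ‖β‖ ^ 2) * ‖z‖ := by
  subst hω hu₁ hu₂
  refine ⟨div_mul_le_of_mul_sq_le (by positivity) (norm_nonneg z) (Real.sqrt_nonneg _) ?_, ?_⟩
  · have wronskian : |2 * (conj α * β).im| * ‖z‖ ^ 2 = 2 * |(conj (z * α) * (z * β)).im| := by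
      rw [im_conj_mul_mul_mul, abs_mul, abs_mul, abs_two, abs_sq]
      ring
    have cauchy_schwarz := abs_im_conj_mul_le (z * α) (z * β)
    rw [sqrt_norm_mul_sq_add_norm_mul_sq] at cauchy_schwarz
    linarith
  · rw [← sqrt_norm_mul_sq_add_norm_mul_sq z α β]
    exact sqrt_sq_add_sq_le_of_abs_le (abs_im_le_norm _) (abs_im_le_norm _)

theorem prufer_amplitude_comparable (α β z : ℂ) (ω : ℝ)
    (hω : ω = 2 * ((starRingEnd ℂ α) * β).im) (hω0 : ω ≠ 0)
    (u₁ u₂ : ℝ) (hu₁ : u₁ = (z * α).im) (hu₂ : u₂ = (z * β).im) :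
    (|ω| / (2 * Real.sqrt (‖α‖ ^ 2 + ‖β‖ ^ 2))) * ‖z‖
      ≤ Real.sqrt (u₁ ^ 2 + u₂ ^ 2) ∧
    Real.sqrt (u₁ ^ 2 + u₂ ^ 2)
      ≤ Real.sqrt (‖α‖ ^ 2 + ‖β‖ ^ 2) * ‖z‖ :=
  prufer_amplitude_comparable_general α β z ω hω u₁ u₂ hu₁ hu₂
end

section
/- Fix constants ℓ > 0 and M > 0. There exist constants K and C (depending only on ℓ and M) with the following property: for every b ∈ ℝ, every x₀ with x₀ − b ≥ K, and every continuously differentiable θ : [x₀, ∞) → ℝ satisfying |θ'(y) − ℓ| ≤ M/(1 + y − b) for all y ≥ x₀, one has |∫_{x₀}^{x} cos(θ(y))/(1 + y − b) dy| ≤ C/(1 + x₀ − b) for all x > x₀. -/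
/-!
Write `w y = 1 / (1 + y - b)`. Since `θ' ≈ ℓ`, the integrand `ℓ cos θ · w` is `(sin θ)' · w` up to
an error of size `M w²`. Integrating by parts, `∫ (sin θ)' w` is bounded by `2 w(x₀)` because `w`
is nonnegative and decreasing, and the error integrates to at most `M ∫ w² = M ∫ (-w') ≤ M w(x₀)`.
-/

open Real Set intervalIntegral MeasureTheory

section WeightedIntegrals

variable {a c : ℝ} {w w' : ℝ → ℝ}

theorem abs_integral_le_mul_sub_of_abs_le_neg_deriv {f : ℝ → ℝ} {B : ℝ} (hac : a ≤ c)
    (hw : ∀ y ∈ Icc a c, HasDerivAt w (w' y) y) (hw' : IntervalIntegrable w' volume a c)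
    (hf : IntervalIntegrable f volume a c) (hfw : ∀ y ∈ Icc a c, |f y| ≤ B * -w' y) :
    |∫ y in a..c, f y| ≤ B * (w a - w c) := by
  rw [← uIcc_of_le hac] at hw
  calc |∫ y in a..c, f y| ≤ ∫ y in a..c, |f y| := abs_integral_le_integral_abs hac
    _ ≤ ∫ y in a..c, B * -w' y := integral_mono_on hac hf.abs (hw'.neg.const_mul B) hfw
    _ = B * (w a - w c) := by
      rw [intervalIntegral.integral_const_mul, intervalIntegral.integral_neg,
        integral_eq_sub_of_hasDerivAt hw hw']
      ring

/-- A bounded-oscillation estimate in the spirit of the second mean value theorem. -/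
theorem abs_integral_deriv_mul_le_of_antitone {u u' : ℝ → ℝ} {B : ℝ} (hac : a ≤ c)
    (hu : ∀ y ∈ Icc a c, HasDerivAt u (u' y) y) (hw : ∀ y ∈ Icc a c, HasDerivAt w (w' y) y)
    (hu' : IntervalIntegrable u' volume a c) (hw' : IntervalIntegrable w' volume a c)
    (huB : ∀ y ∈ Icc a c, |u y| ≤ B) (hw_nonneg : ∀ y ∈ Icc a c, 0 ≤ w y)
    (hw'_nonpos : ∀ y ∈ Icc a c, w' y ≤ 0) :
    |∫ y in a..c, u' y * w y| ≤ 2 * B * w a := by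
  have ha : a ∈ Icc a c := left_mem_Icc.2 hac
  have hc : c ∈ Icc a c := right_mem_Icc.2 hac
  have hI : uIcc a c = Icc a c := uIcc_of_le hac
  have hu_cont : ContinuousOn u (uIcc a c) := fun y hy ↦
    (hu y (hI ▸ hy)).continuousAt.continuousWithinAt
  have hparts : ∫ y in a..c, u' y * w y = u c * w c - u a * w a - ∫ y in a..c, u y * w' y := by
    rw [integral_mul_deriv_eq_deriv_mul (hI ▸ hu) (hI ▸ hw) hu' hw']
    ring
  have hrest : |∫ y in a..c, u y * w' y| ≤ B * (w a - w c) := by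
    refine abs_integral_le_mul_sub_of_abs_le_neg_deriv hac hw hw' (hw'.continuousOn_mul hu_cont)
      fun y hy ↦ ?_
    rw [abs_mul, abs_of_nonpos (hw'_nonpos y hy)]
    exact mul_le_mul_of_nonneg_right (huB y hy) (neg_nonneg.2 (hw'_nonpos y hy))
  have hend : ∀ y ∈ Icc a c, |u y * w y| ≤ B * w y := fun y hy ↦ by
    rw [abs_mul, abs_of_nonneg (hw_nonneg y hy)]
    exact mul_le_mul_of_nonneg_right (huB y hy) (hw_nonneg y hy)
  rw [hparts]
  calc |u c * w c - u a * w a - ∫ y in a..c, u y * w' y|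
      ≤ |u c * w c| + |u a * w a| + |∫ y in a..c, u y * w' y| := abs_sub _ _ |>.trans
        (by gcongr; exact abs_sub _ _)
    _ ≤ B * w c + B * w a + B * (w a - w c) := by gcongr <;> apply hend <;> assumption
    _ = 2 * B * w a := by ring

theorem abs_mul_integral_cos_mul_le {θ θ' : ℝ → ℝ} {ℓ M : ℝ} (hac : a ≤ c)
    (hθ : ∀ y ∈ Icc a c, HasDerivAt θ (θ' y) y) (hθ' : ContinuousOn θ' (Icc a c))
    (hw : ∀ y ∈ Icc a c, HasDerivAt w (w' y) y) (hw' : ContinuousOn w' (Icc a c))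
    (hw_nonneg : ∀ y ∈ Icc a c, 0 ≤ w y) (hw'_nonpos : ∀ y ∈ Icc a c, w' y ≤ 0) (hM : 0 ≤ M)
    (hθℓ : ∀ y ∈ Icc a c, |θ' y - ℓ| * w y ≤ M * -w' y) :
    |ℓ * ∫ y in a..c, cos (θ y) * w y| ≤ (2 + M) * w a := by
  have hθ_cont : ContinuousOn θ (Icc a c) := fun y hy ↦
    (hθ y hy).continuousAt.continuousWithinAt
  have hw_cont : ContinuousOn w (Icc a c) := fun y hy ↦ (hw y hy).continuousAt.continuousWithinAt
  have hmain_int : IntervalIntegrable (fun y ↦ cos (θ y) * θ' y * w y) volume a c :=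
    (((continuous_cos.comp_continuousOn hθ_cont).mul hθ').mul hw_cont).intervalIntegrable_of_Icc hac
  have herr_int : IntervalIntegrable (fun y ↦ cos (θ y) * (θ' y - ℓ) * w y) volume a c :=
    (((continuous_cos.comp_continuousOn hθ_cont).mul (hθ'.sub continuousOn_const)).mul
      hw_cont).intervalIntegrable_of_Icc hac
  have hsplit : ℓ * ∫ y in a..c, cos (θ y) * w y =
      (∫ y in a..c, cos (θ y) * θ' y * w y) - ∫ y in a..c, cos (θ y) * (θ' y - ℓ) * w y := by
    rw [← integral_sub hmain_int herr_int, ← intervalIntegral.integral_const_mul]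
    congr 1 with y
    ring
  have hmain : |∫ y in a..c, cos (θ y) * θ' y * w y| ≤ 2 * 1 * w a :=
    abs_integral_deriv_mul_le_of_antitone hac (fun y hy ↦ (hθ y hy).sin) hw
      ((continuous_cos.comp_continuousOn hθ_cont).mul hθ' |>.intervalIntegrable_of_Icc hac)
      (hw'.intervalIntegrable_of_Icc hac) (fun y _ ↦ abs_sin_le_one _) hw_nonneg hw'_nonpos
  have herr : |∫ y in a..c, cos (θ y) * (θ' y - ℓ) * w y| ≤ M * (w a - w c) := by
    refine abs_integral_le_mul_sub_of_abs_le_neg_deriv hac hw (hw'.intervalIntegrable_of_Icc hac)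
      herr_int fun y hy ↦ ?_
    rw [abs_mul, abs_mul, abs_of_nonneg (hw_nonneg y hy), mul_assoc]
    exact (mul_le_of_le_one_left (mul_nonneg (abs_nonneg _) (hw_nonneg y hy))
      (abs_cos_le_one _)).trans (hθℓ y hy)
  have hwc : 0 ≤ M * w c := mul_nonneg hM (hw_nonneg c (right_mem_Icc.2 hac))
  rw [hsplit]
  calc _ ≤ |∫ y in a..c, cos (θ y) * θ' y * w y| + |∫ y in a..c, cos (θ y) * (θ' y - ℓ) * w y| :=
        abs_sub _ _
    _ ≤ 2 * 1 * w a + M * (w a - w c) := add_le_add hmain herr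
    _ ≤ (2 + M) * w a := by linarith

end WeightedIntegrals

theorem oscillatory_cancellation_general (ℓ M : ℝ) (hℓ : 0 < ℓ) :
    ∃ K C : ℝ, ∀ b x₀ : ℝ, x₀ - b ≥ K →
      ∀ θ θ' : ℝ → ℝ,
        (∀ y, x₀ ≤ y → HasDerivAt θ (θ' y) y) →
        (∀ y, x₀ ≤ y → ContinuousAt θ' y) →
        (∀ y, x₀ ≤ y → |θ' y - ℓ| ≤ M / (1 + y - b)) →
        ∀ x, x₀ < x →
          |∫ y in x₀..x, Real.cos (θ y) / (1 + y - b)| ≤ C / (1 + x₀ - b) := by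
  refine ⟨0, (2 + M) / ℓ, fun b x₀ hK θ θ' hθ hθ' hbound x hx ↦ ?_⟩
  have hpos : ∀ y, x₀ ≤ y → 0 < 1 + y - b := fun y hy ↦ by linarith
  have hM : 0 ≤ M := by
    simpa using (le_div_iff₀ (hpos x₀ le_rfl)).1 ((abs_nonneg _).trans (hbound x₀ le_rfl))
  have hweight : ∀ y ∈ Icc x₀ x,
      HasDerivAt (fun y ↦ (1 + y - b)⁻¹) (-1 / (1 + y - b) ^ 2) y := fun y hy ↦
    (((hasDerivAt_id' y).const_add 1).sub_const b).inv (hpos y hy.1).ne'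
  have key := abs_mul_integral_cos_mul_le hx.le (fun y hy ↦ hθ y hy.1)
    (fun y hy ↦ (hθ' y hy.1).continuousWithinAt) hweight
    (continuousOn_const.div (by fun_prop) fun y hy ↦ (pow_pos (hpos y hy.1) 2).ne')
    (fun y hy ↦ (inv_pos.2 (hpos y hy.1)).le)
    (fun y hy ↦ div_nonpos_of_nonpos_of_nonneg (by norm_num) (sq_nonneg _)) hM
    (fun y hy ↦ by
      have hd := hpos y hy.1
      calc |θ' y - ℓ| * (1 + y - b)⁻¹ ≤ M / (1 + y - b) * (1 + y - b)⁻¹ :=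
            mul_le_mul_of_nonneg_right (hbound y hy.1) (inv_pos.2 hd).le
        _ = M * -(-1 / (1 + y - b) ^ 2) := by field_simp)
  simp only [div_eq_mul_inv (cos _)]
  rw [abs_mul, abs_of_pos hℓ] at key
  calc _ = ℓ * |∫ y in x₀..x, cos (θ y) * (1 + y - b)⁻¹| / ℓ := by field_simp
    _ ≤ (2 + M) * (1 + x₀ - b)⁻¹ / ℓ := by gcongr
    _ = (2 + M) / ℓ / (1 + x₀ - b) := by ring

theorem oscillatory_cancellation (ℓ M : ℝ) (hℓ : 0 < ℓ) (hM : 0 < M) :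
    ∃ K C : ℝ, ∀ b x₀ : ℝ, x₀ - b ≥ K →
      ∀ θ θ' : ℝ → ℝ,
        (∀ y, x₀ ≤ y → HasDerivAt θ (θ' y) y) →
        (∀ y, x₀ ≤ y → ContinuousAt θ' y) →
        (∀ y, x₀ ≤ y → |θ' y - ℓ| ≤ M / (1 + y - b)) →
        ∀ x, x₀ < x →
          |∫ y in x₀..x, Real.cos (θ y) / (1 + y - b)| ≤ C / (1 + x₀ - b) :=
  oscillatory_cancellation_general ℓ M hℓ
end

section
/- Let G ≥ 1, C > 0, M ≥ 0, a ≥ 0. Suppose g : [a, ∞) → ℝ is measurable with 1/G ≤ g(y) ≤ G for all y, and θ : [a, ∞) → ℝ is measurable such that |∫_a^x cos(4θ(y)) / (g(y)(1+y)) dy| ≤ M for all x ≥ a. Then for all x ≥ a, −∫_a^x (C/(2 g(y))) · sin²(2θ(y)) / (1+y) dy ≤ −(C/(4G))·ln((1+x)/(1+a)) + C·M/4. -/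
/-!
Since `sin² 2θ = (1 - cos 4θ) / 2`, the damping integral splits into a non-oscillating part
`(C/4) ∫ dy / (g (1+y))`, which is at least `(C/(4G)) log ((1+x)/(1+a))` because `g ≤ G`, and an
oscillating part `(C/4) ∫ cos 4θ / (g (1+y))`, which is at most `C M / 4` by hypothesis.
-/

open Real MeasureTheory intervalIntegral

theorem IntervalIntegrable.bdd_mul {μ : Measure ℝ} {f g : ℝ → ℝ} {a b c : ℝ}
    (hg : IntervalIntegrable g μ a b) (hf : Measurable f) (hbound : ∀ y, |f y| ≤ c) :
    IntervalIntegrable (fun y => f y * g y) μ a b := by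
  rw [intervalIntegrable_iff] at hg ⊢
  exact hg.bdd_mul hf.aestronglyMeasurable (ae_of_all _ hbound)

theorem integral_sin_sq_two_mul_mul {w θ : ℝ → ℝ} {a b : ℝ}
    (hw : IntervalIntegrable w volume a b) (hθ : Measurable θ) :
    ∫ y in a..b, sin (2 * θ y) ^ 2 * w y
      = (∫ y in a..b, w y) / 2 - (∫ y in a..b, cos (4 * θ y) * w y) / 2 := by
  have hcos : IntervalIntegrable (fun y => cos (4 * θ y) * w y) volume a b :=
    hw.bdd_mul (by fun_prop) fun y => abs_cos_le_one _
  rw [← intervalIntegral.integral_div, ← intervalIntegral.integral_div,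
    ← integral_sub (hw.div_const 2) (hcos.div_const 2)]
  congr 1 with y
  rw [sin_sq_eq_half_sub, show 2 * (2 * θ y) = 4 * θ y by ring]
  ring

theorem intervalIntegrable_inv_one_add {μ : Measure ℝ} [IsLocallyFiniteMeasure μ] {a b : ℝ}
    (ha : -1 < a) (hb : -1 < b) : IntervalIntegrable (fun y => (1 + y)⁻¹) μ a b := by
  refine intervalIntegrable_inv (fun y hy => ?_) (by fun_prop)
  rcases Set.mem_uIcc.1 hy with h | h <;> linarith [h.1]

theorem integral_inv_one_add {a b : ℝ} (ha : -1 < a) (hb : -1 < b) :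
    ∫ y in a..b, (1 + y)⁻¹ = log ((1 + b) / (1 + a)) := by
  rw [integral_comp_add_left (fun y => y⁻¹), integral_inv_of_pos] <;> linarith

theorem mul_log_le_integral_of_mul_inv_one_add_le {w : ℝ → ℝ} {a b c : ℝ} (ha : -1 < a)
    (hab : a ≤ b) (hw : IntervalIntegrable w volume a b)
    (hlow : ∀ y ∈ Set.Icc a b, c * (1 + y)⁻¹ ≤ w y) :
    c * log ((1 + b) / (1 + a)) ≤ ∫ y in a..b, w y := by
  have hb : -1 < b := ha.trans_le hab
  rw [← integral_inv_one_add ha hb, ← intervalIntegral.integral_const_mul]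
  exact integral_mono_on hab ((intervalIntegrable_inv_one_add ha hb).const_mul c) hw hlow

theorem decay_mechanism_general (G C M a : ℝ) (hG : 1 ≤ G) (hC : 0 < C) (ha : 0 ≤ a)
    (g θ : ℝ → ℝ) (hgm : Measurable g) (hθm : Measurable θ)
    (hg : ∀ y, 1 / G ≤ g y ∧ g y ≤ G)
    (hosc : ∀ x, a ≤ x → |∫ y in a..x, Real.cos (4 * θ y) / (g y * (1 + y))| ≤ M) :
    ∀ x, a ≤ x →
      -∫ y in a..x, (C / (2 * g y)) * Real.sin (2 * θ y) ^ 2 / (1 + y)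
        ≤ -(C / (4 * G)) * Real.log ((1 + x) / (1 + a)) + C * M / 4 := by
  intro x hx
  have hG0 : 0 < G := by linarith
  have hg0 (y : ℝ) : 0 < g y := lt_of_lt_of_le (by positivity) (hg y).1
  have hw : IntervalIntegrable (fun y => (g y * (1 + y))⁻¹) volume a x := by
    simp only [mul_inv]
    refine (intervalIntegrable_inv_one_add (by linarith) (by linarith)).bdd_mul (c := G)
      hgm.inv fun y => ?_
    rw [abs_of_pos (inv_pos.2 (hg0 y))]
    exact inv_le_of_inv_le₀ hG0 (by simpa using (hg y).1)
  have hlog : G⁻¹ * log ((1 + x) / (1 + a)) ≤ ∫ y in a..x, (g y * (1 + y))⁻¹ := by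
    refine mul_log_le_integral_of_mul_inv_one_add_le (by linarith) hx hw fun y hy => ?_
    rw [← mul_inv]
    exact inv_anti₀ (by nlinarith [hg0 y, hy.1])
      (mul_le_mul_of_nonneg_right (hg y).2 (by linarith [hy.1]))
  have hcos : ∫ y in a..x, cos (4 * θ y) * (g y * (1 + y))⁻¹ ≤ M :=
    (le_abs_self _).trans (by simpa only [div_eq_mul_inv] using hosc x hx)
  have hsplit : ∫ y in a..x, (C / (2 * g y)) * sin (2 * θ y) ^ 2 / (1 + y)
      = C / 2 * ∫ y in a..x, sin (2 * θ y) ^ 2 * (g y * (1 + y))⁻¹ := by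
    rw [← intervalIntegral.integral_const_mul]
    congr 1 with y
    rw [mul_inv]
    ring
  rw [hsplit, integral_sin_sq_two_mul_mul hw hθm]
  have hC4 : 0 ≤ C / 4 := by positivity
  linear_combination mul_le_mul_of_nonneg_left hlog hC4 + mul_le_mul_of_nonneg_left hcos hC4

theorem decay_mechanism (G C M a : ℝ) (hG : 1 ≤ G) (hC : 0 < C) (hM : 0 ≤ M) (ha : 0 ≤ a)
    (g θ : ℝ → ℝ) (hgm : Measurable g) (hθm : Measurable θ)
    (hg : ∀ y, 1 / G ≤ g y ∧ g y ≤ G)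
    (hosc : ∀ x, a ≤ x → |∫ y in a..x, Real.cos (4 * θ y) / (g y * (1 + y))| ≤ M) :
    ∀ x, a ≤ x →
      -∫ y in a..x, (C / (2 * g y)) * Real.sin (2 * θ y) ^ 2 / (1 + y)
        ≤ -(C / (4 * G)) * Real.log ((1 + x) / (1 + a)) + C * M / 4 :=
  decay_mechanism_general G C M a hG hC ha g θ hgm hθm hg hosc
end
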